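/- Let G be a finite set of finite nonempty sets and h : G → ℝ with h > 0. Then the symmetric matrix L^{++}(x,y) = Σ_{u∈G, x⊆u, y⊆u} h(u) is positive definite. -/

import Mathlib

/-!
Writing `Z` for the zeta matrix of the inclusion order on `G` (`Z x u = 1` if `x ⊆ u`, else `0`),
one has `L⁺⁺ = Z * diagonal h * Zᵀ`. The diagonal factor is positive definite, and `Z` is
unitriangular with respect to inclusion, so `w ↦ w ᵥ* Z` is injective by well-founded induction
on the order; conjugating by such a matrix preserves positive definiteness.
-/

open Matrix Finset

def zetaMatrix (ι R : Type*) [LE ι] [DecidableLE ι] [Zero R] [One R] : Matrix ι ι R :=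
  of fun i j => if i ≤ j then 1 else 0

variable {ι R : Type*} [PartialOrder ι] [DecidableLE ι]

lemma zetaMatrix_conjTranspose [Semiring R] [StarRing R] :
    (zetaMatrix ι R)ᴴ = (zetaMatrix ι R)ᵀ := by
  ext i j
  by_cases hji : j ≤ i <;> simp [zetaMatrix, hji]

variable [Fintype ι]

lemma vecMul_zetaMatrix_apply [NonAssocSemiring R] (w : ι → R) (j : ι) :
    (w ᵥ* zetaMatrix ι R) j = ∑ i with i ≤ j, w i := by
  simp [vecMul, dotProduct, zetaMatrix, sum_filter]

lemma vecMul_zetaMatrix_injective [NonAssocSemiring R] [IsRightCancelAdd R] :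
    Function.Injective fun w : ι → R => w ᵥ* zetaMatrix ι R := by
  classical
  intro w₁ w₂ hw
  funext j
  induction j using WellFoundedLT.induction with
  | ind j ih =>
    have hsum := congr_fun hw j
    simp only [vecMul_zetaMatrix_apply] at hsum
    have hj : j ∈ ({i | i ≤ j} : Finset ι) := by simp
    rw [← add_sum_erase _ _ hj, ← add_sum_erase _ _ hj] at hsum
    have hrest : ∑ i ∈ ({i | i ≤ j} : Finset ι).erase j, w₁ i =
        ∑ i ∈ ({i | i ≤ j} : Finset ι).erase j, w₂ i := sum_congr rfl fun i hi => by
      simp only [mem_erase, mem_filter] at hi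
      exact ih i (lt_of_le_of_ne hi.2.2 hi.1)
    rwa [hrest, add_left_inj] at hsum

lemma zetaMatrix_mul_diagonal_mul_transpose_apply [NonAssocSemiring R] [DecidableEq ι]
    (d : ι → R) (i j : ι) :
    (zetaMatrix ι R * diagonal d * (zetaMatrix ι R)ᵀ) i j = ∑ k with i ≤ k ∧ j ≤ k, d k := by
  rw [mul_apply]
  simp [mul_diagonal, zetaMatrix, sum_filter, ← ite_and, and_comm]

lemma posDef_zetaMatrix_mul_diagonal_mul_transpose [Ring R] [PartialOrder R] [StarRing R]
    [StarOrderedRing R] [NoZeroDivisors R] [Nontrivial R] [DecidableEq ι]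
    {d : ι → R} (hd : ∀ i, 0 < d i) :
    (zetaMatrix ι R * diagonal d * (zetaMatrix ι R)ᵀ).PosDef := by
  rw [← zetaMatrix_conjTranspose]
  exact (posDef_diagonal_iff.mpr hd).mul_mul_conjTranspose_same vecMul_zetaMatrix_injective

theorem stmt_10_general (G : Finset (Finset ℕ))
    (h : Finset ℕ → ℝ) (hpos : ∀ x ∈ G, 0 < h x)
    (Lpp : Matrix {x // x ∈ G} {x // x ∈ G} ℝ)
    (hLpp : ∀ x y, Lpp x y = ∑ u ∈ G.filter (fun u => x.1 ⊆ u ∧ y.1 ⊆ u), h u) :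
    Lpp.PosDef := by
  classical
  have hL : Lpp = zetaMatrix {x // x ∈ G} ℝ * diagonal (fun u : {x // x ∈ G} => h u) *
      (zetaMatrix {x // x ∈ G} ℝ)ᵀ := by
    ext x y
    rw [hLpp, zetaMatrix_mul_diagonal_mul_transpose_apply, sum_filter, sum_filter]
    exact (sum_coe_sort G fun u => if x.1 ⊆ u ∧ y.1 ⊆ u then h u else 0).symm
  rw [hL]
  exact posDef_zetaMatrix_mul_diagonal_mul_transpose fun u => hpos u u.2

theorem stmt_10 (G : Finset (Finset ℕ)) (hne : ∀ x ∈ G, x.Nonempty)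
    (h : Finset ℕ → ℝ) (hpos : ∀ x ∈ G, 0 < h x)
    (Lpp : Matrix {x // x ∈ G} {x // x ∈ G} ℝ)
    (hLpp : ∀ x y, Lpp x y = ∑ u ∈ G.filter (fun u => x.1 ⊆ u ∧ y.1 ⊆ u), h u) :
    Lpp.PosDef :=
  stmt_10_general G h hpos Lpp hLpp
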